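/- arXiv:2512.23668 — 3 statements merged into one kernel-verified Lean document; each statement's English description precedes it below -/
import Mathlib

section
/- The product ⋆ on H^{2,3} = ℤ⟨z_2,z_3⟩, defined by the rules w⋆1 = 1⋆w = w, (w z_2)⋆w' = w⋆(w' z_2) = (w⋆w') z_2, and (w z_3)⋆(w' z_3) = (w⋆w' z_3) z_3 + (w z_3⋆w') z_3 + (w⋆w') z_2^3, is well-defined as a ℤ-bilinear operation on H^{2,3}. -/
/-- A word in `ℤ⟨z₂,z₃⟩`, recorded as its list of indices (each `2` or `3`). -/
def IsWord23 (w : List ℕ) : Prop := ∀ k ∈ w, k = 2 ∨ k = 3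

/-- Auxiliary star product on *reversed* words (the head of the list is the rightmost
letter `z_k` of the word), with values in the free `ℤ`-module on reversed words. -/
noncomputable def starAux : List ℕ → List ℕ → (List ℕ →₀ ℤ)
  | [], v => Finsupp.single v 1
  | u, [] => Finsupp.single u 1
  | 2 :: u, v => Finsupp.mapDomain (2 :: ·) (starAux u v)
  | u, 2 :: v => Finsupp.mapDomain (2 :: ·) (starAux u v)
  | 3 :: u, 3 :: v =>
      Finsupp.mapDomain (3 :: ·) (starAux u (3 :: v)) +
      Finsupp.mapDomain (3 :: ·) (starAux (3 :: u) v) +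
      Finsupp.mapDomain (fun l => 2 :: 2 :: 2 :: l) (starAux u v)
  | _, _ => 0
termination_by u v => u.length + v.length

/-- The star product of two words of `ℤ⟨z₂,z₃⟩` (written in natural left-to-right order),
as a `ℤ`-linear combination of words. -/
noncomputable def starW (u v : List ℕ) : List ℕ →₀ ℤ :=
  Finsupp.mapDomain List.reverse (starAux u.reverse v.reverse)

/-- The `ℤ`-bilinear extension of the star product to the free `ℤ`-module on words. -/
noncomputable def starHS : (List ℕ →₀ ℤ) →ₗ[ℤ] (List ℕ →₀ ℤ) →ₗ[ℤ] (List ℕ →₀ ℤ) :=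
  Finsupp.lsum ℤ fun u => LinearMap.toSpanSingleton ℤ _
    (Finsupp.lsum ℤ fun v => LinearMap.toSpanSingleton ℤ _ (starW u v))

lemma starAux_nil_left (v : List ℕ) : starAux [] v = Finsupp.single v 1 := by rw [starAux]

lemma starAux_nil_right (u : List ℕ) : starAux u [] = Finsupp.single u 1 := by
  cases u with
  | nil => rw [starAux]
  | cons a u => rw [starAux] <;> simp

lemma starAux_two_left (u v : List ℕ) :
    starAux (2::u) v = Finsupp.mapDomain (2 :: ·) (starAux u v) := by
  cases v with
  | nil =>
      rw [starAux_nil_right, starAux_nil_right, Finsupp.mapDomain_single]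
  | cons b v => rw [starAux] <;> simp

lemma starAux_two_right (u v : List ℕ) :
    starAux u (2::v) = Finsupp.mapDomain (2 :: ·) (starAux u v) := by
  induction u generalizing v with
  | nil => rw [starAux_nil_left, starAux_nil_left, Finsupp.mapDomain_single]
  | cons a u ih =>
      by_cases h : a = 2
      · subst h
        rw [starAux_two_left, starAux_two_left, ih]
      · rw [starAux] <;> simp [h]

lemma starAux_three (u v : List ℕ) :
    starAux (3::u) (3::v) =
      Finsupp.mapDomain (3 :: ·) (starAux u (3 :: v)) +
      Finsupp.mapDomain (3 :: ·) (starAux (3 :: u) v) +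
      Finsupp.mapDomain (fun l => 2 :: 2 :: 2 :: l) (starAux u v) := by
  rw [starAux] <;> simp

lemma starHS_single (u v : List ℕ) :
    starHS (Finsupp.single u 1) (Finsupp.single v 1) = starW u v := by
  simp [starHS, Finsupp.lsum_single, LinearMap.toSpanSingleton_apply]

lemma mapD (f g : List ℕ → List ℕ) (x : List ℕ →₀ ℤ) :
    Finsupp.mapDomain f (Finsupp.mapDomain g x) = Finsupp.mapDomain (fun l => f (g l)) x :=
  (Finsupp.mapDomain_comp (v := x)).symm

lemma starW_app2_left (w w' : List ℕ) :
    starW (w ++ [2]) w' = Finsupp.mapDomain (· ++ [2]) (starW w w') := by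
  simp only [starW, List.reverse_append, List.reverse_cons, List.reverse_nil,
    List.nil_append, List.cons_append, starAux_two_left, mapD]

lemma starW_app2_right (w w' : List ℕ) :
    starW w (w' ++ [2]) = Finsupp.mapDomain (· ++ [2]) (starW w w') := by
  simp only [starW, List.reverse_append, List.reverse_cons, List.reverse_nil,
    List.nil_append, List.cons_append, starAux_two_right, mapD]

lemma starW_nil_right (w : List ℕ) : starW w [] = Finsupp.single w 1 := by
  simp [starW, starAux_nil_right, Finsupp.mapDomain_single]

lemma starW_nil_left (w : List ℕ) : starW [] w = Finsupp.single w 1 := by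
  simp [starW, starAux_nil_left, Finsupp.mapDomain_single]

lemma starW_app3 (w w' : List ℕ) :
    starW (w ++ [3]) (w' ++ [3]) =
      Finsupp.mapDomain (· ++ [3]) (starW w (w' ++ [3]))
      + Finsupp.mapDomain (· ++ [3]) (starW (w ++ [3]) w')
      + Finsupp.mapDomain (· ++ [2, 2, 2]) (starW w w') := by
  simp only [starW, List.reverse_append, List.reverse_cons, List.reverse_nil,
    List.nil_append, List.cons_append, starAux_three, Finsupp.mapDomain_add, mapD]
  congr 1
  exact Finsupp.mapDomain_congr fun l _ => by simp

/-- The star product on `H^{2,3} = ℤ⟨z₂,z₃⟩` is well defined: there exists a `ℤ`-bilinear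
operation on the free `ℤ`-module on words in `z₂, z₃` satisfying the defining recursion
`w⋆1 = 1⋆w = w`, `(w z₂)⋆w' = w⋆(w' z₂) = (w⋆w') z₂`, and
`(w z₃)⋆(w' z₃) = (w⋆w' z₃) z₃ + (w z₃⋆w') z₃ + (w⋆w') z₂³`. -/
theorem star_well_defined :
    ∃ S : (List ℕ →₀ ℤ) →ₗ[ℤ] (List ℕ →₀ ℤ) →ₗ[ℤ] (List ℕ →₀ ℤ),
      (∀ w : List ℕ, IsWord23 w →
        S (Finsupp.single w 1) (Finsupp.single [] 1) = Finsupp.single w 1 ∧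
        S (Finsupp.single [] 1) (Finsupp.single w 1) = Finsupp.single w 1) ∧
      (∀ w w' : List ℕ, IsWord23 w → IsWord23 w' →
        S (Finsupp.single (w ++ [2]) 1) (Finsupp.single w' 1)
          = Finsupp.mapDomain (· ++ [2]) (S (Finsupp.single w 1) (Finsupp.single w' 1)) ∧
        S (Finsupp.single w 1) (Finsupp.single (w' ++ [2]) 1)
          = Finsupp.mapDomain (· ++ [2]) (S (Finsupp.single w 1) (Finsupp.single w' 1))) ∧
      (∀ w w' : List ℕ, IsWord23 w → IsWord23 w' →
        S (Finsupp.single (w ++ [3]) 1) (Finsupp.single (w' ++ [3]) 1)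
          = Finsupp.mapDomain (· ++ [3])
              (S (Finsupp.single w 1) (Finsupp.single (w' ++ [3]) 1))
            + Finsupp.mapDomain (· ++ [3])
              (S (Finsupp.single (w ++ [3]) 1) (Finsupp.single w' 1))
            + Finsupp.mapDomain (· ++ [2, 2, 2])
              (S (Finsupp.single w 1) (Finsupp.single w' 1))) := by
  refine ⟨starHS, ?_, ?_, ?_⟩
  · intro w _
    exact ⟨by rw [starHS_single, starW_nil_right], by rw [starHS_single, starW_nil_left]⟩
  · intro w w' _ _
    simp only [starHS_single]
    exact ⟨starW_app2_left w w', starW_app2_right w w'⟩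
  · intro w w' _ _
    simp only [starHS_single]
    exact starW_app3 w w'
end

section
/- Let S ⊂ ℤ be a finite set and define P^{eo}(S) = {A ⊆ S : for all i, i ∈ A and i even ⟺ i+1 ∈ A and i+1 odd} and P^{oe}(S) = {A ⊆ S : for all i, i ∈ A and i odd ⟺ i+1 ∈ A and i+1 even}. Suppose S = [2t]_c^1 for c = [a_1,...,a_r; b_1,...,b_s; c_0] with c_0 > 1, and decompose each A ∈ P^{eo}(S) as A = A_1 ∪ A_2 ∪ A_3 with A_1 = A ∩ [2l_r − 1], A_2 = A ∩ ([2l_r + 2c_0 − 2] \ [2l_r]), A_3 = A \ [2l_r + 2c_0 − 1], where l_r = a_1+···+a_r. Then the map sending A (in a first copy of P^{eo}(S)) to (A_1 − 1) ∪ (A_2 − 1) ∪ {2l_r + 2c_0 − 3, 2l_r + 2c_0 − 2} ∪ (A_3 + 1), and A (in a second copy) to (A_1 − 1) ∪ (A_2 − 1) ∪ (A_3 + 1), is a bijection from P^{eo}(S) ⊔ P^{eo}(S) onto P^{oe}(S). -/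
/-- The tuple `[a₁,…,a_r; b₁,…,b_s; c] =
({1}^{2a₁−1},2,…,{1}^{2a_r−1},2,{1}^{2c−2},2,{1}^{2b₁−1},…,2,{1}^{2b_s−1})`. -/
def tupleC (as bs : List ℕ) (c : ℕ) : List ℕ :=
  (as.map fun a => List.replicate (2 * a - 1) 1 ++ [2]).flatten
    ++ List.replicate (2 * c - 2) 1
    ++ (bs.map fun b => 2 :: List.replicate (2 * b - 1) 1).flatten

/-- The set `[2t]_c^{>1}` of (1-based) indices `i` with `c_i > 1`. -/
def idxGt (cs : List ℕ) : Finset ℕ :=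
  (Finset.Icc 1 cs.length).filter fun i => 1 < cs.getD (i - 1) 0

/-- The set `[2t]_c^{1}` of (1-based) indices `i` with `c_i = 1`. -/
def idxOne (cs : List ℕ) : Finset ℕ :=
  (Finset.Icc 1 cs.length).filter fun i => cs.getD (i - 1) 0 = 1

/-- `P^{eo}(S) = {A ⊆ S : i ∈ A and i even ⟺ i+1 ∈ A and i+1 odd}`. -/
def Peo (S : Finset ℕ) : Set (Finset ℕ) :=
  {A | A ⊆ S ∧ ∀ i : ℕ, (i ∈ A ∧ Even i) ↔ (i + 1 ∈ A ∧ Odd (i + 1))}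

/-- `P^{oe}(S) = {A ⊆ S : i ∈ A and i odd ⟺ i+1 ∈ A and i+1 even}`. -/
def Poe (S : Finset ℕ) : Set (Finset ℕ) :=
  {A | A ⊆ S ∧ ∀ i : ℕ, (i ∈ A ∧ Odd i) ↔ (i + 1 ∈ A ∧ Even (i + 1))}

/-- `A₁ = A ∩ [2l_r − 1]`. -/
def part₁ (lr : ℕ) (A : Finset ℕ) : Finset ℕ := A.filter (· ≤ 2 * lr - 1)

/-- `A₂ = A ∩ ([2l_r + 2c₀ − 2] \ [2l_r])`. -/
def part₂ (lr c₀ : ℕ) (A : Finset ℕ) : Finset ℕ :=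
  A.filter fun i => 2 * lr + 1 ≤ i ∧ i ≤ 2 * lr + 2 * c₀ - 2

/-- `A₃ = A \ [2l_r + 2c₀ − 1]`. -/
def part₃ (lr c₀ : ℕ) (A : Finset ℕ) : Finset ℕ :=
  A.filter fun i => 2 * lr + 2 * c₀ - 1 < i

/-- `ι₁(A) = (A₁−1) ∪ (A₂−1) ∪ {2l_r+2c₀−3, 2l_r+2c₀−2} ∪ (A₃+1)`. -/
def iota₁ (lr c₀ : ℕ) (A : Finset ℕ) : Finset ℕ :=
  (part₁ lr A).image (· - 1) ∪ (part₂ lr c₀ A).image (· - 1)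
    ∪ {2 * lr + 2 * c₀ - 3, 2 * lr + 2 * c₀ - 2} ∪ (part₃ lr c₀ A).image (· + 1)

/-- `ι₂(A) = (A₁−1) ∪ (A₂−1) ∪ (A₃+1)`. -/
def iota₂ (lr c₀ : ℕ) (A : Finset ℕ) : Finset ℕ :=
  (part₁ lr A).image (· - 1) ∪ (part₂ lr c₀ A).image (· - 1)
    ∪ (part₃ lr c₀ A).image (· + 1)

/-!
A set in `P^{eo}(S)` is a union of pairs `{2k, 2k+1}`, one in `P^{oe}(S)` a union of pairs
`{2k-1, 2k}`. For `K = 2l_r + 2c₀ - 2`, the set `S = [2t]_c^1` contains every odd number below `K`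
and `K` itself, misses `K + 1`, and above `K + 1` contains every even number up to `2t`.
Shifting the elements `≤ K` down by one and those `≥ K + 2` up by one therefore turns the
eo-pairs of `S` into oe-pairs and maps `P^{eo}(S)` bijectively onto the sets of `P^{oe}(S)`
avoiding the pair `{K - 1, K}`; adding that pair reaches the rest of `P^{oe}(S)`.
-/

theorem Set.BijOn.sumElim {α β γ : Type*} {f : α → γ} {g : β → γ} {s : Set α} {s' : Set β}
    {t t' : Set γ} (hf : BijOn f s t) (hg : BijOn g s' t') (h : Disjoint t t') :
    BijOn (Sum.elim f g) (Sum.inl '' s ∪ Sum.inr '' s') (t ∪ t') := by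
  refine ⟨?_, ?_, ?_⟩
  · rintro _ (⟨a, ha, rfl⟩ | ⟨b, hb, rfl⟩)
    exacts [Or.inl (hf.mapsTo ha), Or.inr (hg.mapsTo hb)]
  · rintro _ (⟨a, ha, rfl⟩ | ⟨b, hb, rfl⟩) _ (⟨a', ha', rfl⟩ | ⟨b', hb', rfl⟩) hab <;>
      simp only [Sum.elim_inl, Sum.elim_inr] at hab
    · rw [hf.injOn ha ha' hab]
    · exact (disjoint_left.1 h (hf.mapsTo ha) (hab ▸ hg.mapsTo hb')).elim
    · exact (disjoint_left.1 h (hf.mapsTo ha') (hab ▸ hg.mapsTo hb)).elim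
    · rw [hg.injOn hb hb' hab]
  · rintro y (hy | hy)
    · obtain ⟨a, ha, rfl⟩ := hf.surjOn hy
      exact ⟨.inl a, Or.inl ⟨a, ha, rfl⟩, rfl⟩
    · obtain ⟨b, hb, rfl⟩ := hg.surjOn hy
      exact ⟨.inr b, Or.inr ⟨b, hb, rfl⟩, rfl⟩

open Finset

section Pairs

variable {S A B : Finset ℕ} {j : ℕ}

lemma mem_Peo_iff : A ∈ Peo S ↔ A ⊆ S ∧ ∀ i, Even i → (i ∈ A ↔ i + 1 ∈ A) := by
  simp only [Peo, Set.mem_ofPred_eq, Nat.odd_add_one, Nat.not_odd_iff_even, and_congr_left_iff]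

lemma mem_Poe_iff : B ∈ Poe S ↔ B ⊆ S ∧ ∀ i, Odd i → (i ∈ B ↔ i + 1 ∈ B) := by
  simp only [Poe, Set.mem_ofPred_eq, Nat.even_add_one, Nat.not_even_iff_odd, and_congr_left_iff]

lemma union_pair_mem_Poe (hB : B ∈ Poe S) (hj : Odd j) (hjS : j ∈ S) (hj₁S : j + 1 ∈ S) :
    B ∪ {j, j + 1} ∈ Poe S := by
  rw [mem_Poe_iff] at hB ⊢
  refine ⟨union_subset hB.1 (by simp [insert_subset_iff, hjS, hj₁S]), fun i hi => ?_⟩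
  have := hB.2 i hi
  have := Nat.odd_iff.1 hi
  have := Nat.odd_iff.1 hj
  simp only [mem_union, mem_insert, mem_singleton]
  grind

lemma sdiff_pair_mem_Poe (hB : B ∈ Poe S) (hj : Odd j) : B \ {j, j + 1} ∈ Poe S := by
  rw [mem_Poe_iff] at hB ⊢
  refine ⟨sdiff_subset.trans hB.1, fun i hi => ?_⟩
  have := hB.2 i hi
  have := Nat.odd_iff.1 hi
  have := Nat.odd_iff.1 hj
  simp only [mem_sdiff, mem_insert, mem_singleton]
  grind

end Pairs

def openGap (K : ℕ) (A : Finset ℕ) : Finset ℕ :=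
  (A.filter (· ≤ K)).image (· - 1) ∪ (A.filter (K + 1 < ·)).image (· + 1)

def closeGap (K : ℕ) (B : Finset ℕ) : Finset ℕ :=
  (B.filter (· < K)).image (· + 1) ∪ (B.filter (K + 2 < ·)).image (· - 1)

section Gap

variable {A B : Finset ℕ} {K : ℕ}

lemma mem_openGap (h0 : 0 ∉ A) {i : ℕ} :
    i ∈ openGap K A ↔ (i < K ∧ i + 1 ∈ A) ∨ (K + 3 ≤ i ∧ i - 1 ∈ A) := by
  simp only [openGap, mem_union, mem_image, mem_filter]
  grind

lemma mem_closeGap {x : ℕ} :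
    x ∈ closeGap K B ↔ (1 ≤ x ∧ x ≤ K ∧ x - 1 ∈ B) ∨ (K + 2 ≤ x ∧ x + 1 ∈ B) := by
  simp only [closeGap, mem_union, mem_image, mem_filter]
  grind

lemma closeGap_openGap (h0 : 0 ∉ A) (hK₁ : K + 1 ∉ A) : closeGap K (openGap K A) = A := by
  ext x
  simp only [mem_closeGap, mem_openGap h0]
  grind

lemma openGap_closeGap (hK : K ∉ B) (hK₁ : K + 1 ∉ B) (hK₂ : K + 2 ∉ B) :
    openGap K (closeGap K B) = B := by
  ext x
  rw [mem_openGap (by simp [mem_closeGap])]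
  simp only [mem_closeGap]
  grind (splits := 16)

end Gap

/-- What the bijection uses of `S = [2t]_c^1`, with `K = 2l_r + 2c₀ - 2` and `T = 2t`. -/
structure IsGappedAt (S : Finset ℕ) (K T : ℕ) : Prop where
  subset_Icc : S ⊆ Icc 1 T
  even_K : Even K
  even_T : Even T
  mem_of_odd : ∀ x, Odd x → x < K → x ∈ S
  mem_K : K ∈ S
  succ_notMem : K + 1 ∉ S
  mem_of_even : ∀ x, Even x → K + 2 ≤ x → x ≤ T → x ∈ S

namespace IsGappedAt

variable {S A B : Finset ℕ} {K T : ℕ}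

lemma bounds (hS : IsGappedAt S K T) {x : ℕ} (hx : x ∈ S) : 1 ≤ x ∧ x ≤ T :=
  mem_Icc.1 (hS.subset_Icc hx)

lemma zero_notMem (hS : IsGappedAt S K T) : 0 ∉ S := fun h => by
  simpa using hS.bounds h

lemma openGap_mem_Poe (hS : IsGappedAt S K T) (hA : A ∈ Peo S) : openGap K A ∈ Poe S := by
  obtain ⟨hAS, hpair⟩ := mem_Peo_iff.1 hA
  have h0 : 0 ∉ A := fun h => hS.zero_notMem (hAS h)
  have hK := Nat.even_iff.1 hS.even_K
  have hKA : K ∉ A := fun h => hS.succ_notMem (hAS ((hpair K hS.even_K).1 h))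
  refine mem_Poe_iff.2 ⟨fun i hi => ?_, fun i hi => ?_⟩
  · have hT := Nat.even_iff.1 hS.even_T
    rw [mem_openGap h0] at hi
    rcases hi with ⟨hiK, hi⟩ | ⟨hiK, hi⟩ <;> rcases Nat.even_or_odd i with he | ho
    · exact hAS ((hpair i he).2 hi)
    · exact hS.mem_of_odd i ho hiK
    · have := (hS.bounds (hAS hi)).2
      have := Nat.even_iff.1 he
      exact hS.mem_of_even i he (by omega) (by omega)
    · have := (hpair (i - 1) (Nat.Odd.sub_odd ho odd_one)).1 hi
      rw [Nat.sub_add_cancel (by omega)] at this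
      exact hAS this
  · have := Nat.odd_iff.1 hi
    have h₁ := hpair (i + 1) hi.add_one
    have h₂ := hpair (i - 1) (Nat.Odd.sub_odd hi odd_one)
    clear hpair
    simp only [mem_openGap h0]
    grind

lemma closeGap_mem_Peo (hS : IsGappedAt S K T) (hB : B ∈ Poe S) (hKB : K ∉ B) :
    closeGap K B ∈ Peo S := by
  obtain ⟨hBS, hpair⟩ := mem_Poe_iff.1 hB
  have h0 : 0 ∉ B := fun h => hS.zero_notMem (hBS h)
  have hK := Nat.even_iff.1 hS.even_K
  have hK₁ := (hS.bounds hS.mem_K).1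
  have hKB' : K - 1 ∉ B := fun h => hKB <| by
    have := (hpair (K - 1) (Nat.Even.sub_odd hK₁ hS.even_K odd_one)).1 h
    rwa [Nat.sub_add_cancel hK₁] at this
  refine mem_Peo_iff.2 ⟨fun x hx => ?_, fun x hx => ?_⟩
  · have hT := Nat.even_iff.1 hS.even_T
    rw [mem_closeGap] at hx
    rcases hx with ⟨hx₁, hxK, hx⟩ | ⟨hxK, hx⟩ <;> rcases Nat.even_or_odd x with he | ho
    · have := (hpair (x - 1) (Nat.Even.sub_odd hx₁ he odd_one)).1 hx
      rw [Nat.sub_add_cancel hx₁] at this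
      exact hBS this
    · exact hS.mem_of_odd x ho (by rw [Nat.odd_iff] at ho; omega)
    · have := (hS.bounds (hBS hx)).2
      exact hS.mem_of_even x he hxK (by rw [Nat.even_iff] at he; omega)
    · exact hBS ((hpair x ho).2 hx)
  · obtain rfl | hx₀ := Nat.eq_zero_or_pos x
    · simp [mem_closeGap, h0]
    have := Nat.even_iff.1 hx
    have h₁ := hpair (x + 1) hx.add_one
    have h₂ := hpair (x - 1) (Nat.Even.sub_odd hx₀ hx odd_one)
    clear hpair
    simp only [mem_closeGap]
    grind

lemma bijOn_openGap (hS : IsGappedAt S K T) :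
    Set.BijOn (openGap K) (Peo S) {B ∈ Poe S | K ∉ B} := by
  refine Set.InvOn.bijOn (f' := closeGap K) ⟨fun A hA => ?_, fun B hB => ?_⟩ (fun A hA => ?_)
    (fun B hB => hS.closeGap_mem_Peo hB.1 hB.2)
  · exact closeGap_openGap (fun h => hS.zero_notMem (hA.1 h)) fun h => hS.succ_notMem (hA.1 h)
  · have hK₁ : K + 1 ∉ B := fun h => hS.succ_notMem (hB.1.1 h)
    have hK₂ : K + 2 ∉ B := fun h =>
      hK₁ ((mem_Poe_iff.1 hB.1).2 (K + 1) hS.even_K.add_one |>.2 h)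
    exact openGap_closeGap hB.2 hK₁ hK₂
  · exact ⟨hS.openGap_mem_Poe hA, by simp [mem_openGap fun h => hS.zero_notMem (hA.1 h)]⟩

lemma bijOn_union_pair (hS : IsGappedAt S K T) :
    Set.BijOn (· ∪ {K - 1, K}) {B ∈ Poe S | K ∉ B} {B ∈ Poe S | K ∈ B} := by
  obtain ⟨j, rfl⟩ : ∃ j, K = j + 1 := ⟨K - 1, by have := (hS.bounds hS.mem_K).1; omega⟩
  have hj : Odd j := Nat.not_even_iff_odd.1 (Nat.even_add_one.1 hS.even_K)
  have hpair : ∀ B ∈ Poe S, j ∈ B ↔ j + 1 ∈ B := fun B hB => (mem_Poe_iff.1 hB).2 j hj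
  simp only [Nat.add_sub_cancel]
  refine Set.InvOn.bijOn (f' := (· \ {j, j + 1})) ⟨fun B hB => ?_, fun B hB => ?_⟩
    (fun B hB => ⟨union_pair_mem_Poe hB.1 hj (hS.mem_of_odd j hj (by omega)) hS.mem_K, by simp⟩)
    (fun B hB => ⟨sdiff_pair_mem_Poe hB.1 hj, by simp⟩)
  · exact union_sdiff_cancel_right (by simp [(hpair B hB.1).not.2 hB.2, hB.2])
  · exact sdiff_union_of_subset (by simp [insert_subset_iff, (hpair B hB.1).2 hB.2, hB.2])

end IsGappedAt

lemma mem_idxOne {cs : List ℕ} {i : ℕ} :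
    i ∈ idxOne cs ↔ 1 ≤ i ∧ i ≤ cs.length ∧ cs.getD (i - 1) 0 = 1 := by
  simp [idxOne, and_assoc]

namespace TupleC

variable {as bs : List ℕ} {n : ℕ}

def leftPart (as : List ℕ) : List ℕ :=
  (as.map fun a => List.replicate (2 * a - 1) 1 ++ [2]).flatten

def rightPart (bs : List ℕ) : List ℕ :=
  (bs.map fun b => 2 :: List.replicate (2 * b - 1) 1).flatten

lemma length_leftBlock {a : ℕ} (ha : 0 < a) :
    (List.replicate (2 * a - 1) 1 ++ [2]).length = 2 * a := by
  simp only [List.length_append, List.length_replicate, List.length_singleton]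
  omega

lemma length_rightBlock {b : ℕ} (hb : 0 < b) :
    (2 :: List.replicate (2 * b - 1) 1).length = 2 * b := by
  simp only [List.length_cons, List.length_replicate]
  omega

lemma length_leftPart (ha : ∀ a ∈ as, 0 < a) : (leftPart as).length = 2 * as.sum := by
  induction as with
  | nil => rfl
  | cons a as ih =>
    simp only [leftPart, List.map_cons, List.flatten_cons, List.sum_cons] at ih ⊢
    rw [List.length_append, length_leftBlock (ha a (by simp)),
      ih fun x hx => ha x (by simp [hx]), mul_add]

lemma length_rightPart (hb : ∀ b ∈ bs, 0 < b) : (rightPart bs).length = 2 * bs.sum := by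
  induction bs with
  | nil => rfl
  | cons b bs ih =>
    simp only [rightPart, List.map_cons, List.flatten_cons, List.sum_cons] at ih ⊢
    rw [List.length_append, length_rightBlock (hb b (by simp)),
      ih fun x hx => hb x (by simp [hx]), mul_add]

lemma getD_leftPart_of_even (ha : ∀ a ∈ as, 0 < a) (hn : Even n) (hlt : n < 2 * as.sum) :
    (leftPart as).getD n 0 = 1 := by
  induction as generalizing n with
  | nil => simp at hlt
  | cons a as ih =>
    have hlen := length_leftBlock (ha a (by simp))
    simp only [leftPart, List.map_cons, List.flatten_cons, List.sum_cons] at ih hlt ⊢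
    by_cases hna : n < 2 * a - 1
    · rw [List.getD_append _ _ _ _ (by omega), List.getD_append _ _ _ _ (by simpa),
        List.getD_replicate _ hna]
    · have := Nat.even_iff.1 hn
      rw [List.getD_append_right _ _ _ _ (by omega), hlen]
      exact ih (fun x hx => ha x (by simp [hx])) (Nat.even_iff.2 (by omega)) (by omega)

lemma getD_leftPart_last (ha : ∀ a ∈ as, 0 < a) (hs : 0 < as.sum) :
    (leftPart as).getD (2 * as.sum - 1) 0 = 2 := by
  induction as with
  | nil => simp at hs
  | cons a as ih =>
    have hlen := length_leftBlock (ha a (by simp))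
    simp only [leftPart, List.map_cons, List.flatten_cons, List.sum_cons] at ih hs ⊢
    rcases Nat.eq_zero_or_pos as.sum with h0 | hpos
    · rw [h0, List.getD_append _ _ _ _ (by omega), List.getD_append_right _ _ _ _ (by simp)]
      simp
    · rw [List.getD_append_right _ _ _ _ (by omega), hlen,
        show 2 * (a + as.sum) - 1 - 2 * a = 2 * as.sum - 1 by omega]
      exact ih (fun x hx => ha x (by simp [hx])) hpos

lemma getD_rightPart_zero (hbs : bs ≠ []) : (rightPart bs).getD 0 0 = 2 := by
  cases bs with
  | nil => contradiction
  | cons b bs => rfl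

lemma getD_rightPart_of_odd (hb : ∀ b ∈ bs, 0 < b) (hn : Odd n) (hlt : n < 2 * bs.sum) :
    (rightPart bs).getD n 0 = 1 := by
  induction bs generalizing n with
  | nil => simp at hlt
  | cons b bs ih =>
    have hlen := length_rightBlock (hb b (by simp))
    have := Nat.odd_iff.1 hn
    simp only [rightPart, List.map_cons, List.flatten_cons, List.sum_cons] at ih hlt ⊢
    by_cases hnb : n < 2 * b
    · obtain ⟨m, rfl⟩ : ∃ m, n = m + 1 := ⟨n - 1, by omega⟩
      rw [List.getD_append _ _ _ _ (by omega), List.getD_cons_succ,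
        List.getD_replicate _ (by omega)]
    · rw [List.getD_append_right _ _ _ _ (by omega), hlen]
      exact ih (fun x hx => hb x (by simp [hx])) (Nat.odd_iff.2 (by omega)) (by omega)

variable {c : ℕ}

lemma tupleC_eq : tupleC as bs c = leftPart as ++ List.replicate (2 * c - 2) 1 ++ rightPart bs :=
  rfl

lemma length_tupleC (ha : ∀ a ∈ as, 0 < a) (hb : ∀ b ∈ bs, 0 < b) :
    (tupleC as bs c).length = 2 * as.sum + (2 * c - 2) + 2 * bs.sum := by
  simp [tupleC_eq, length_leftPart ha, length_rightPart hb, add_assoc]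

lemma getD_tupleC_of_lt (ha : ∀ a ∈ as, 0 < a) (hn : n < 2 * as.sum) :
    (tupleC as bs c).getD n 0 = (leftPart as).getD n 0 := by
  rw [tupleC_eq, List.getD_append _ _ _ _ (by simp [length_leftPart ha]; omega),
    List.getD_append _ _ _ _ (by rwa [length_leftPart ha])]

lemma getD_tupleC_of_mem_Ico (ha : ∀ a ∈ as, 0 < a) (hn₁ : 2 * as.sum ≤ n)
    (hn₂ : n < 2 * as.sum + (2 * c - 2)) : (tupleC as bs c).getD n 0 = 1 := by
  rw [tupleC_eq, List.getD_append _ _ _ _ (by simp [length_leftPart ha]; omega),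
    List.getD_append_right _ _ _ _ (by rwa [length_leftPart ha]), length_leftPart ha,
    List.getD_replicate _ (by omega)]

lemma getD_tupleC_of_le (ha : ∀ a ∈ as, 0 < a) (hn : 2 * as.sum + (2 * c - 2) ≤ n) :
    (tupleC as bs c).getD n 0 = (rightPart bs).getD (n - (2 * as.sum + (2 * c - 2))) 0 := by
  rw [tupleC_eq, List.getD_append_right _ _ _ _ (by simpa [length_leftPart ha])]
  simp [length_leftPart ha]

end TupleC

open TupleC in
theorem isGappedAt_idxOne_tupleC {as bs : List ℕ} {c : ℕ} (ha : ∀ a ∈ as, 0 < a)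
    (hb : ∀ b ∈ bs, 0 < b) (hc : 1 < c) :
    IsGappedAt (idxOne (tupleC as bs c)) (2 * as.sum + 2 * c - 2)
      (2 * as.sum + 2 * c - 2 + 2 * bs.sum) where
  subset_Icc x hx := by
    rw [mem_idxOne, length_tupleC ha hb] at hx
    exact mem_Icc.2 ⟨hx.1, by omega⟩
  even_K := ⟨as.sum + c - 1, by omega⟩
  even_T := ⟨as.sum + c - 1 + bs.sum, by omega⟩
  mem_of_odd x hx hxK := by
    have := Nat.odd_iff.1 hx
    refine mem_idxOne.2 ⟨by omega, by rw [length_tupleC ha hb]; omega, ?_⟩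
    by_cases hxa : x < 2 * as.sum
    · rw [getD_tupleC_of_lt ha (by omega)]
      exact getD_leftPart_of_even ha (Nat.even_iff.2 (by omega)) (by omega)
    · exact getD_tupleC_of_mem_Ico ha (by omega) (by omega)
  mem_K := mem_idxOne.2 ⟨by omega, by rw [length_tupleC ha hb]; omega,
    getD_tupleC_of_mem_Ico ha (by omega) (by omega)⟩
  succ_notMem h := by
    rw [mem_idxOne, length_tupleC ha hb] at h
    obtain ⟨-, hlen, hone⟩ := h
    have hbs : bs ≠ [] := by rintro rfl; simp at hlen; omega
    rw [getD_tupleC_of_le ha (by omega), show 2 * as.sum + 2 * c - 2 + 1 - 1 -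
      (2 * as.sum + (2 * c - 2)) = 0 by omega, getD_rightPart_zero hbs] at hone
    omega
  mem_of_even x hx hxK hxT := by
    have := Nat.even_iff.1 hx
    refine mem_idxOne.2 ⟨by omega, by rw [length_tupleC ha hb]; omega, ?_⟩
    rw [getD_tupleC_of_le ha (by omega)]
    exact getD_rightPart_of_odd hb (Nat.odd_iff.2 (by omega)) (by omega)

open TupleC in
theorem two_mul_sum_notMem_idxOne_tupleC {as bs : List ℕ} {c : ℕ} (ha : ∀ a ∈ as, 0 < a) :
    2 * as.sum ∉ idxOne (tupleC as bs c) := by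
  intro h
  obtain ⟨hpos, -, hone⟩ := mem_idxOne.1 h
  rw [getD_tupleC_of_lt ha (by omega), getD_leftPart_last ha (by omega)] at hone
  omega

lemma iota₁_eq_union (lr c₀ : ℕ) (A : Finset ℕ) :
    iota₁ lr c₀ A = iota₂ lr c₀ A ∪ {2 * lr + 2 * c₀ - 3, 2 * lr + 2 * c₀ - 2} :=
  Finset.union_right_comm _ _ _

lemma iota₂_eq_openGap {lr c₀ : ℕ} {A : Finset ℕ} (hc : 0 < c₀) (hA : 2 * lr ∉ A) :
    iota₂ lr c₀ A = openGap (2 * lr + 2 * c₀ - 2) A := by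
  have hlow : part₁ lr A ∪ part₂ lr c₀ A = A.filter (· ≤ 2 * lr + 2 * c₀ - 2) := by
    ext x
    simp only [part₁, part₂, mem_union, mem_filter]
    have : x ∈ A → x ≠ 2 * lr := fun hx h => hA (h ▸ hx)
    grind
  have hhigh : part₃ lr c₀ A = A.filter (2 * lr + 2 * c₀ - 2 + 1 < ·) :=
    filter_congr fun x _ => by omega
  rw [iota₂, ← image_union, hlow, hhigh, openGap]

/-- For `S = [2t]_c^1` with `c = [a₁,…,a_r; b₁,…,b_s; c₀]`, `c₀ > 1`, the map sending `A`
in the first copy of `P^{eo}(S)` to `ι₁(A)` and `A` in the second copy to `ι₂(A)` is a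
bijection from `P^{eo}(S) ⊔ P^{eo}(S)` onto `P^{oe}(S)`. -/
theorem bij_Peo_sum_Poe (as bs : List ℕ) (c₀ : ℕ)
    (ha : ∀ a ∈ as, 0 < a) (hb : ∀ b ∈ bs, 0 < b) (hc : 1 < c₀) :
    Set.BijOn (Sum.elim (iota₁ as.sum c₀) (iota₂ as.sum c₀))
      (Sum.inl '' Peo (idxOne (tupleC as bs c₀)) ∪
        Sum.inr '' Peo (idxOne (tupleC as bs c₀)))
      (Poe (idxOne (tupleC as bs c₀))) := by
  set S := idxOne (tupleC as bs c₀)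
  set K := 2 * as.sum + 2 * c₀ - 2
  have hS : IsGappedAt S K (K + 2 * bs.sum) := isGappedAt_idxOne_tupleC ha hb hc
  have h₂ : Set.BijOn (iota₂ as.sum c₀) (Peo S) {B ∈ Poe S | K ∉ B} :=
    hS.bijOn_openGap.congr fun A hA =>
      (iota₂_eq_openGap (by omega) fun h => two_mul_sum_notMem_idxOne_tupleC ha (hA.1 h)).symm
  have h₁ : Set.BijOn (iota₁ as.sum c₀) (Peo S) {B ∈ Poe S | K ∈ B} := by
    refine (hS.bijOn_union_pair.comp h₂).congr fun A _ => ?_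
    rw [Function.comp_apply, iota₁_eq_union, show 2 * as.sum + 2 * c₀ - 3 = K - 1 by omega]
  have hsplit : Poe S = {B ∈ Poe S | K ∈ B} ∪ {B ∈ Poe S | K ∉ B} := by
    ext B
    by_cases hB : K ∈ B <;> simp [hB]
  rw [hsplit]
  exact h₁.sumElim h₂ (Set.disjoint_left.2 fun B hB₁ hB₂ => hB₂.2 hB₁.2)
end

section
/- Letting N → ∞ in the level-N identity Σ_{0<n_1<···<n_{c+2}<N} 1/(n_1^3 n_2^2···n_c^2 n_{c+1} n_{c+2}^2) + Σ_{0<n_1<···<n_c<n_{c+1}≤n_{c+2}<N} 1/(n_1^3 n_2^2···n_c^2 (N−n_{c+1}) n_{c+2}^2) = Σ_{0<n_1<···<n_{c+2}<N} 1/(n_1^2···n_{c+2}^2) + 2 Σ_{0<n_1<···<n_{c+1}<N} 1/(n_1^3 n_2^3 n_3^2···n_{c+1}^2), the second sum on the left tends to 0 and one recovers ζ(3,{2}^{c−1},1,2) = ζ({2}^{c+2}) + 2ζ(3,3,{2}^{c−1}). -/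
/-- The truncated multiple zeta sum `∑_{0<n₁<⋯<n_r<N} 1/(n₁^{k₁}⋯n_r^{k_r})` over `ℚ`. -/
def truncMZV (N : ℕ) (ks : List ℕ) : ℚ :=
  ∑ n : Fin ks.length → Fin N,
    if (∀ i j : Fin ks.length, i < j → (n i : ℕ) < (n j : ℕ)) ∧ (∀ i, 0 < (n i : ℕ)) then
      ∏ i, (1 : ℚ) / ((n i : ℕ) : ℚ) ^ ks.get i
    else 0

/-- The second sum on the left-hand side:
`∑_{0<n₁<⋯<n_c<n_{c+1}≤n_{c+2}<N} 1/(n₁³ n₂²⋯n_c² (N−n_{c+1}) n_{c+2}²)`. -/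
def truncFlat (N c : ℕ) : ℚ :=
  ∑ n : Fin (c + 2) → Fin N,
    if (∀ i j : Fin (c + 2), (i : ℕ) < (j : ℕ) → (j : ℕ) ≤ c → (n i : ℕ) < (n j : ℕ))
        ∧ (∀ i j : Fin (c + 2), (i : ℕ) < (j : ℕ) → (n i : ℕ) ≤ (n j : ℕ))
        ∧ (∀ i, 0 < (n i : ℕ)) then
      ∏ i : Fin (c + 2),
        if (i : ℕ) = 0 then (1 : ℚ) / ((n i : ℕ) : ℚ) ^ 3
        else if (i : ℕ) = c then (1 : ℚ) / ((N : ℚ) - ((n i : ℕ) : ℚ))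
        else (1 : ℚ) / ((n i : ℕ) : ℚ) ^ 2
    else 0

/-- The multiple zeta value `ζ(k₁,…,k_r)`. -/
noncomputable def mzv (ks : List ℕ) : ℝ :=
  ∑' n : Fin ks.length → ℕ,
    if (∀ i j : Fin ks.length, i < j → n i < n j) ∧ (∀ i, 0 < n i) then
      ∏ i, (1 : ℝ) / (n i : ℝ) ^ ks.get i
    else 0

/-!
A multiple zeta summand with all exponents `≥ 1` and last exponent `≥ 2` is at most
`(∏ nᵢ)⁻¹ n_r⁻¹ ≤ ∏ nᵢ^{-(1 + 1/r)}`, because the last index `n_r` is the largest; the right-hand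
side is summable over `ℕ^r`, so every truncated sum converges to its multiple zeta value.

Bounding `1/n₁³` by `1/n₁²` and forgetting every order constraint except `a ≤ b`, where
`a = n_{c+1}` and `b = n_{c+2}`, the second sum on the left is at most
`2^c ∑_{1 ≤ a ≤ b < N} 1/((N − a) b²)`. Summing over `b` first with `∑_{b ≥ a} b⁻² ≤ 2/a` and
writing `1/(a(N − a)) = (1/a + 1/(N − a))/N` bounds this by a Cesàro mean of `1/a`, which tends
to `0`. The identity of multiple zeta values is then the limit of the level-`N` identity.
-/

open Finset Filter Topology

noncomputable def mzvTerm (ks : List ℕ) (n : Fin ks.length → ℕ) : ℝ :=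
  if (∀ i j : Fin ks.length, i < j → n i < n j) ∧ (∀ i, 0 < n i) then
    ∏ i, (1 : ℝ) / (n i : ℝ) ^ ks.get i
  else 0

lemma mzvTerm_nonneg (ks : List ℕ) (n : Fin ks.length → ℕ) : 0 ≤ mzvTerm ks n := by
  unfold mzvTerm
  split_ifs
  · positivity
  · exact le_rfl

lemma summable_pi_prod_of_nonneg {α : Type*} {g : α → ℝ} (hg : Summable g) (hg0 : ∀ a, 0 ≤ g a) :
    ∀ r : ℕ, Summable fun n : Fin r → α => ∏ i, g (n i)
  | 0 => .of_finite
  | r + 1 => by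
    rw [← (Fin.consEquiv fun _ => α).summable_iff]
    refine (hg.mul_of_nonneg (summable_pi_prod_of_nonneg hg hg0 r) hg0
      fun n => prod_nonneg fun i _ => hg0 _).congr fun p => ?_
    simp [Fin.prod_univ_succ]

lemma prod_inv_pow_le_inv_prod_mul_inv {ι : Type*} [Fintype ι] [DecidableEq ι] {x : ι → ℝ}
    {k : ι → ℕ} (j : ι) (hx : ∀ i, 1 ≤ x i) (hk : ∀ i, 1 ≤ k i) (hkj : 2 ≤ k j) :
    ∏ i, (x i ^ k i)⁻¹ ≤ (∏ i, x i)⁻¹ * (x j)⁻¹ := by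
  have hx0 : ∀ i, 0 < x i := fun i => zero_lt_one.trans_le (hx i)
  rw [prod_inv_distrib, ← mul_inv]
  refine inv_anti₀ (mul_pos (prod_pos fun i _ => hx0 i) (hx0 j)) ?_
  calc (∏ i, x i) * x j = ∏ i, x i ^ (if i = j then 2 else 1) := by
        rw [← Fintype.prod_ite_eq' j x, ← prod_mul_distrib]
        refine prod_congr rfl fun i _ => ?_
        split_ifs <;> ring
    _ ≤ ∏ i, x i ^ k i := by
        refine prod_le_prod (fun i _ => pow_nonneg (hx0 i).le _) fun i _ =>
          pow_le_pow_right₀ (hx i) ?_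
        split_ifs with h
        · exact h ▸ hkj
        · exact hk i

lemma inv_prod_mul_inv_le_prod_inv_rpow {ι : Type*} [Fintype ι] {x : ι → ℝ} (j : ι)
    (hx : ∀ i, 1 ≤ x i) (hj : ∀ i, x i ≤ x j) :
    (∏ i, x i)⁻¹ * (x j)⁻¹ ≤ ∏ i, (x i ^ (1 + (Fintype.card ι : ℝ)⁻¹))⁻¹ := by
  have hx0 : ∀ i, 0 ≤ x i := fun i => zero_le_one.trans (hx i)
  set P := ∏ i, x i
  have hP : 0 < P := prod_pos fun i _ => zero_lt_one.trans_le (hx i)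
  have hroot : P ^ (Fintype.card ι : ℝ)⁻¹ ≤ x j := by
    calc P ^ (Fintype.card ι : ℝ)⁻¹ ≤ (x j ^ Fintype.card ι) ^ (Fintype.card ι : ℝ)⁻¹ := by
          refine Real.rpow_le_rpow hP.le ?_ (by positivity)
          simpa using prod_le_prod (s := univ) (fun i _ => hx0 i) fun i _ => hj i
      _ = x j := Real.pow_rpow_inv_natCast (hx0 j) (Fintype.card_pos_iff.mpr ⟨j⟩).ne'
  rw [prod_inv_distrib, Real.finsetProd_rpow _ _ fun i _ => hx0 i, Real.rpow_add hP,
    Real.rpow_one, mul_inv]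
  gcongr

lemma summable_mzvTerm_append_singleton {l : List ℕ} {k : ℕ} (hl : ∀ a ∈ l, 1 ≤ a)
    (hk : 2 ≤ k) :
    Summable (mzvTerm (l ++ [k])) := by
  set ks := l ++ [k]
  let j : Fin ks.length := ⟨l.length, by simp [ks]⟩
  have hkj : ks.get j = k := by simp [ks, j]
  have hks : ∀ i, 1 ≤ ks.get i := fun i => by
    rcases List.mem_append.mp (List.get_mem ks i) with h | h
    · exact hl _ h
    · rw [List.mem_singleton.mp h]; omega
  have hmax : ∀ i, i ≤ j := fun i => Fin.le_def.mpr (by have := i.isLt; simp [ks] at this; omega)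
  have hp : 1 < 1 + (Fintype.card (Fin ks.length) : ℝ)⁻¹ :=
    lt_add_of_pos_right 1 (by simp [ks]; positivity)
  refine (summable_pi_prod_of_nonneg (Real.summable_nat_rpow_inv.mpr hp) (fun _ => by positivity)
    ks.length).of_nonneg_of_le (mzvTerm_nonneg ks) fun n => ?_
  unfold mzvTerm
  split_ifs with h
  · obtain ⟨hmono, hpos⟩ := h
    have hx : ∀ i, (1 : ℝ) ≤ n i := fun i => by exact_mod_cast hpos i
    have hj : ∀ i, (n i : ℝ) ≤ n j := fun i => by
      exact_mod_cast StrictMono.monotone hmono (hmax i)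
    simp only [one_div]
    exact (prod_inv_pow_le_inv_prod_mul_inv j hx hks (hkj ▸ hk)).trans
      (inv_prod_mul_inv_le_prod_inv_rpow j hx hj)
  · exact prod_nonneg fun i _ => by positivity

lemma truncMZV_eq_sum_mzvTerm (N : ℕ) (ks : List ℕ) :
    (truncMZV N ks : ℝ) = ∑ n ∈ Fintype.piFinset fun _ => range N, mzvTerm ks n := by
  have hcast : (truncMZV N ks : ℝ) = ∑ n : Fin ks.length → Fin N, mzvTerm ks fun i => n i := by
    rw [truncMZV, Rat.cast_sum]
    refine sum_congr rfl fun n _ => ?_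
    unfold mzvTerm
    split_ifs <;> push_cast <;> rfl
  rw [hcast]
  refine sum_bij' (fun n _ i => n i)
    (fun m hm i => ⟨m i, mem_range.mp (Fintype.mem_piFinset.mp hm i)⟩) (fun n _ => by simp)
    (fun _ _ => mem_univ _) (fun _ _ => rfl) (fun _ _ => rfl) fun _ _ => rfl

lemma tendsto_truncMZV {ks : List ℕ} (hs : Summable (mzvTerm ks)) :
    Tendsto (fun N => (truncMZV N ks : ℝ)) atTop (𝓝 (mzv ks)) := by
  have hmono : Monotone fun N => Fintype.piFinset fun _ : Fin ks.length => range N :=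
    fun _ _ hab => Fintype.piFinset_subset _ _ fun _ => range_subset_range.mpr hab
  have hcover : ∀ n : Fin ks.length → ℕ, ∃ N, n ∈ Fintype.piFinset fun _ => range N :=
    fun n => ⟨univ.sup n + 1, Fintype.mem_piFinset.mpr fun i =>
      mem_range.mpr (Nat.lt_succ_of_le (le_sup (mem_univ i)))⟩
  simp only [truncMZV_eq_sum_mzvTerm]
  exact hs.hasSum.comp (tendsto_atTop_finset_of_monotone hmono hcover)

lemma summable_mzvTerm_three_twos_one_two (d : ℕ) :
    Summable (mzvTerm ([3] ++ List.replicate d 2 ++ [1, 2])) := by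
  rw [show [3] ++ List.replicate d 2 ++ [1, 2] = [3] ++ List.replicate d 2 ++ [1] ++ [2] by simp]
  exact summable_mzvTerm_append_singleton
    (fun a ha => by simp [List.mem_replicate] at ha; omega) le_rfl

lemma summable_mzvTerm_replicate_two (r : ℕ) : Summable (mzvTerm (List.replicate (r + 1) 2)) := by
  rw [List.replicate_succ']
  exact summable_mzvTerm_append_singleton
    (fun a ha => by simp [List.mem_replicate] at ha; omega) le_rfl

lemma summable_mzvTerm_three_three_twos (d : ℕ) :
    Summable (mzvTerm ([3, 3] ++ List.replicate d 2)) := by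
  rcases d with _ | d
  · exact summable_mzvTerm_append_singleton (l := [3]) (by simp) (by norm_num)
  · rw [List.replicate_succ', ← List.append_assoc]
    exact summable_mzvTerm_append_singleton
      (fun a ha => by simp [List.mem_replicate] at ha; omega) le_rfl

lemma sum_pi_prod_mul_apply_pair {R α : Type*} [CommSemiring R] [Fintype α] (c : ℕ)
    (f : α → R) (g : α → α → R) :
    ∑ n : Fin (c + 2) → α,
        (∏ i : Fin c, f (n (Fin.castAdd 2 i))) * g (n (Fin.natAdd c 0)) (n (Fin.natAdd c 1))
      = (∑ a, f a) ^ c * ∑ a, ∑ b, g a b := by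
  classical
  rw [← (Fin.appendEquiv c 2).sum_comp, Fintype.sum_prod_type]
  simp only [Fin.appendEquiv_apply, Fin.append_left, Fin.append_right]
  rw [← Finset.sum_mul_sum, ← Fintype.prod_sum, prod_const, card_univ, Fintype.card_fin]
  congr 1
  rw [← (piFinTwoEquiv fun _ => α).symm.sum_comp, Fintype.sum_prod_type]
  simp

lemma sum_range_inv_sq_le_two (N : ℕ) : ∑ m ∈ range N, ((m : ℚ) ^ 2)⁻¹ ≤ 2 := by
  have h := sum_Ioo_inv_sq_le (α := ℚ) 0 N
  rw [← Ico_add_one_left_eq_Ioo, zero_add] at h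
  rcases N with _ | N
  · simp
  rw [range_eq_Ico, sum_eq_sum_Ico_succ_bot (by omega)]
  simpa using h

def flatKernel (N a b : ℕ) : ℚ :=
  if 0 < a ∧ a ≤ b then (((N : ℚ) - a) * (b : ℚ) ^ 2)⁻¹ else 0

lemma flatKernel_nonneg {N a : ℕ} (ha : a < N) (b : ℕ) : 0 ≤ flatKernel N a b := by
  have : (a : ℚ) < N := by exact_mod_cast ha
  unfold flatKernel
  split_ifs
  · exact inv_nonneg.mpr (mul_nonneg (by linarith) (sq_nonneg _))
  · exact le_rfl

lemma sum_flatKernel_le (N : ℕ) {a : ℕ} (haN : a < N) :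
    ∑ b ∈ range N, flatKernel N a b ≤ 2 / N * ((a : ℚ)⁻¹ + ((N : ℚ) - a)⁻¹) := by
  have hNa : (0 : ℚ) < N - a := by
    have : (a : ℚ) < N := by exact_mod_cast haN
    linarith
  rcases Nat.eq_zero_or_pos a with rfl | ha
  · simp only [flatKernel, lt_self_iff_false, false_and, if_false, sum_const_zero]
    positivity
  have hrow : ∑ b ∈ range N, flatKernel N a b
      = ((N : ℚ) - a)⁻¹ * ∑ b ∈ Ioo (a - 1) N, ((b : ℚ) ^ 2)⁻¹ := by
    have hIoo : {b ∈ range N | a ≤ b} = Ioo (a - 1) N := by ext; simp; omega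
    simp only [flatKernel, ha, true_and]
    rw [← sum_filter, hIoo, mul_sum]
    simp only [mul_inv]
  have htail := sum_Ioo_inv_sq_le (α := ℚ) (a - 1) N
  rw [Nat.cast_sub ha, Nat.cast_one, sub_add_cancel] at htail
  calc ∑ b ∈ range N, flatKernel N a b ≤ ((N : ℚ) - a)⁻¹ * (2 / a) := by
        rw [hrow]; gcongr
    _ = 2 / N * ((a : ℚ)⁻¹ + ((N : ℚ) - a)⁻¹) := by
        have : (0 : ℚ) < a := by exact_mod_cast ha
        have : (0 : ℚ) < N := by exact_mod_cast ha.trans haN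
        field_simp
        ring

lemma sum_range_inv_sub_eq_sum_range_inv_add_one (N : ℕ) :
    ∑ a ∈ range N, ((N : ℚ) - a)⁻¹ = ∑ a ∈ range N, ((a : ℚ) + 1)⁻¹ := by
  rw [← sum_range_reflect]
  refine sum_congr rfl fun a ha => ?_
  rw [Nat.cast_sub (by simp at ha; omega), Nat.cast_sub (by simp at ha; omega)]
  ring_nf

lemma sum_sum_flatKernel_le (N : ℕ) :
    ∑ a ∈ range N, ∑ b ∈ range N, flatKernel N a b
      ≤ 2 * ((N : ℚ)⁻¹ * ∑ a ∈ range N, ((a : ℚ)⁻¹ + ((a : ℚ) + 1)⁻¹)) :=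
  calc ∑ a ∈ range N, ∑ b ∈ range N, flatKernel N a b
      ≤ ∑ a ∈ range N, 2 / N * ((a : ℚ)⁻¹ + ((N : ℚ) - a)⁻¹) :=
        sum_le_sum fun a ha => sum_flatKernel_le N (mem_range.1 ha)
    _ = 2 * ((N : ℚ)⁻¹ * ∑ a ∈ range N, ((a : ℚ)⁻¹ + ((a : ℚ) + 1)⁻¹)) := by
        rw [← mul_sum, sum_add_distrib, sum_add_distrib, sum_range_inv_sub_eq_sum_range_inv_add_one]
        ring

lemma truncFlat_le_sum_prod_mul_flatKernel {c : ℕ} (hc : 0 < c) (N : ℕ) :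
    truncFlat N c ≤ ∑ n : Fin (c + 2) → Fin N,
      (∏ i : Fin c, (((n (Fin.castAdd 2 i) : ℕ) : ℚ) ^ 2)⁻¹)
        * flatKernel N (n (Fin.natAdd c 0)) (n (Fin.natAdd c 1)) := by
  refine sum_le_sum fun n _ => ?_
  split_ifs with h
  · obtain ⟨-, hweak, hpos⟩ := h
    have hpair : 1 / ((N : ℚ) - (n (Fin.natAdd c 0) : ℕ))
          * (1 / ((n (Fin.natAdd c 1) : ℕ) : ℚ) ^ 2)
        = flatKernel N (n (Fin.natAdd c 0)) (n (Fin.natAdd c 1)) := by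
      rw [flatKernel, if_pos ⟨hpos _, hweak _ _ (by simp)⟩, mul_inv, one_div, one_div]
    rw [Fin.prod_univ_add, Fin.prod_univ_two]
    simp only [Fin.val_castAdd, Fin.val_natAdd, Fin.val_zero, Fin.val_one, add_zero, hc.ne',
      if_false, if_true, Nat.add_one_ne_zero, Nat.succ_ne_self, hpair]
    refine mul_le_mul_of_nonneg_right (prod_le_prod (fun i _ => ?_) fun i _ => ?_)
      (flatKernel_nonneg (n _).isLt _)
    · split_ifs with _ hic
      · positivity
      · exact absurd hic i.isLt.ne
      · positivity
    · have hn : (1 : ℚ) ≤ (n (Fin.castAdd 2 i) : ℕ) := by exact_mod_cast hpos _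
      split_ifs with _ hic
      · rw [one_div]
        exact inv_anti₀ (by positivity) (pow_le_pow_right₀ hn (by norm_num))
      · exact absurd hic i.isLt.ne
      · rw [one_div]
  · exact mul_nonneg (prod_nonneg fun i _ => by positivity) (flatKernel_nonneg (n _).isLt _)

lemma truncFlat_le {c : ℕ} (hc : 0 < c) (N : ℕ) :
    truncFlat N c
      ≤ 2 ^ c * (2 * ((N : ℚ)⁻¹ * ∑ a ∈ range N, ((a : ℚ)⁻¹ + ((a : ℚ) + 1)⁻¹))) := by
  calc truncFlat N c
      ≤ ∑ n : Fin (c + 2) → Fin N, (∏ i : Fin c, (((n (Fin.castAdd 2 i) : ℕ) : ℚ) ^ 2)⁻¹)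
          * flatKernel N (n (Fin.natAdd c 0)) (n (Fin.natAdd c 1)) :=
        truncFlat_le_sum_prod_mul_flatKernel hc N
    _ = (∑ m ∈ range N, ((m : ℚ) ^ 2)⁻¹) ^ c
          * ∑ a ∈ range N, ∑ b ∈ range N, flatKernel N a b := by
        refine (sum_pi_prod_mul_apply_pair c (fun m : Fin N => (((m : ℕ) : ℚ) ^ 2)⁻¹)
          fun a b => flatKernel N a b).trans ?_
        rw [Fin.sum_univ_eq_sum_range (fun m => ((m : ℚ) ^ 2)⁻¹),
          Fin.sum_univ_eq_sum_range (fun a => ∑ b : Fin N, flatKernel N a b)]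
        simp only [Fin.sum_univ_eq_sum_range (flatKernel N _)]
    _ ≤ 2 ^ c * (2 * ((N : ℚ)⁻¹ * ∑ a ∈ range N, ((a : ℚ)⁻¹ + ((a : ℚ) + 1)⁻¹))) := by
        gcongr
        · exact sum_nonneg fun a ha => sum_nonneg fun b _ => flatKernel_nonneg (mem_range.1 ha) b
        · exact sum_range_inv_sq_le_two N
        · exact sum_sum_flatKernel_le N

lemma truncFlat_nonneg (N c : ℕ) : 0 ≤ truncFlat N c := by
  refine sum_nonneg fun n _ => ?_
  split_ifs
  · refine prod_nonneg fun i _ => ?_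
    have : ((n i : ℕ) : ℚ) ≤ N := by exact_mod_cast (n i).isLt.le
    split_ifs
    · positivity
    · exact one_div_nonneg.mpr (sub_nonneg.mpr this)
    · positivity
  · exact le_rfl

lemma tendsto_truncFlat {c : ℕ} (hc : 0 < c) :
    Tendsto (fun N => (truncFlat N c : ℝ)) atTop (𝓝 0) := by
  have hmean : Tendsto (fun N : ℕ => (N : ℝ)⁻¹ * ∑ a ∈ range N, ((a : ℝ)⁻¹ + ((a : ℝ) + 1)⁻¹))
      atTop (𝓝 0) := by
    have h := (tendsto_inv_atTop_nhds_zero_nat (𝕜 := ℝ)).add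
      tendsto_one_div_add_atTop_nhds_zero_nat
    simpa [one_div] using h.cesaro
  refine squeeze_zero (fun N => by exact_mod_cast truncFlat_nonneg N c) (fun N => ?_)
    (by simpa using (hmean.const_mul 2).const_mul ((2 : ℝ) ^ c))
  simpa using (Rat.cast_le (K := ℝ)).mpr (truncFlat_le hc N)

open Filter in
/-- Letting `N → ∞` in the level-`N` identity: assuming the identity at every level `N`,
the second sum on the left tends to `0`, each truncated multiple zeta sum converges to
the corresponding MZV, and one recovers Hoffman's identity
`ζ(3,{2}^{c−1},1,2) = ζ({2}^{c+2}) + 2ζ(3,3,{2}^{c−1})`. -/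
theorem hoffman_from_levelN (c : ℕ) (hc : 0 < c)
    (hlevel : ∀ N : ℕ,
      truncMZV N ([3] ++ List.replicate (c - 1) 2 ++ [1, 2]) + truncFlat N c
        = truncMZV N (List.replicate (c + 2) 2)
          + 2 * truncMZV N ([3, 3] ++ List.replicate (c - 1) 2)) :
    Tendsto (fun N : ℕ => ((truncFlat N c : ℚ) : ℝ)) atTop (nhds 0)
    ∧ Tendsto (fun N : ℕ =>
        ((truncMZV N ([3] ++ List.replicate (c - 1) 2 ++ [1, 2]) : ℚ) : ℝ)) atTop
        (nhds (mzv ([3] ++ List.replicate (c - 1) 2 ++ [1, 2])))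
    ∧ Tendsto (fun N : ℕ =>
        ((truncMZV N (List.replicate (c + 2) 2) : ℚ) : ℝ)) atTop
        (nhds (mzv (List.replicate (c + 2) 2)))
    ∧ Tendsto (fun N : ℕ =>
        ((truncMZV N ([3, 3] ++ List.replicate (c - 1) 2) : ℚ) : ℝ)) atTop
        (nhds (mzv ([3, 3] ++ List.replicate (c - 1) 2)))
    ∧ mzv ([3] ++ List.replicate (c - 1) 2 ++ [1, 2])
        = mzv (List.replicate (c + 2) 2) + 2 * mzv ([3, 3] ++ List.replicate (c - 1) 2) := by
  have hflat := tendsto_truncFlat hc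
  have h₁ := tendsto_truncMZV (summable_mzvTerm_three_twos_one_two (c - 1))
  have h₂ := tendsto_truncMZV (summable_mzvTerm_replicate_two (c + 1))
  have h₃ := tendsto_truncMZV (summable_mzvTerm_three_three_twos (c - 1))
  refine ⟨hflat, h₁, h₂, h₃, tendsto_nhds_unique (by simpa using h₁.add hflat) ?_⟩
  exact (h₂.add (h₃.const_mul 2)).congr fun N => by exact_mod_cast (hlevel N).symm
end
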